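/- Fix $\theta \in (0, \pi]$ and $\tau_1 \geq 1$. The function $G(\tau_2) = 2\operatorname{arth}\sqrt{\frac{\theta^2 + (\tau_1-\tau_2)^2}{\theta^2 + (\tau_1+\tau_2)^2}} - \frac{\theta}{\tau_1} - \log\tau_1 + \log\tau_2$ is strictly increasing in $\tau_2$ on $[1, \tau_1]$. -/

import Mathlib

/-!
Put `a = √(θ² + (τ₁ - τ₂)²)` and `b = √(θ² + (τ₁ + τ₂)²)`. Since `b² - a² = 4 τ₁ τ₂`, we get
`2 arth (a / b) = log ((a + b)² / (b² - a²))`, so the `log τ₂` cancels and the function is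
`2 log (a + b)` up to a constant. The derivative of `a + b` in `τ₂` is `f (τ₁ + τ₂) - f (τ₁ - τ₂)`
with `f u = u / √(θ² + u²) = sin (arctan (u / θ))` strictly increasing, so it is positive for `τ₂ > 0`.
-/

open Real

/-- The inverse hyperbolic tangent, `arth t = (1/2) log ((1+t)/(1-t))`. -/
noncomputable def arth (t : ℝ) : ℝ := Real.log ((1 + t) / (1 - t)) / 2
theorem two_mul_arth_div {a b : ℝ} (ha : 0 ≤ a) (hab : a < b) :
    2 * arth (a / b) = 2 * log (a + b) - log (b ^ 2 - a ^ 2) := by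
  have hb : 0 < b := ha.trans_lt hab
  have hsq : 0 < b ^ 2 - a ^ 2 := by nlinarith
  have hratio : (1 + a / b) / (1 - a / b) = (a + b) ^ 2 / (b ^ 2 - a ^ 2) := by
    have hba : b - a ≠ 0 := sub_ne_zero.2 hab.ne'
    rw [eq_div_iff hsq.ne']
    field_simp
    ring
  rw [arth, hratio, log_div (by positivity) hsq.ne', log_pow]
  push_cast
  ring

theorem div_sqrt_add_sq_strictMono {k : ℝ} (hk : 0 < k) :
    StrictMono fun u : ℝ => u / √(k + u ^ 2) := by
  have hsin : ∀ u : ℝ, u / √(k + u ^ 2) = sin (arctan (u / √k)) := by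
    intro u
    have hsk : 0 < √k := sqrt_pos.2 hk
    rw [sin_arctan, div_pow, sq_sqrt hk.le, one_add_div hk.ne', sqrt_div' _ hk.le,
      div_div_div_cancel_right₀ hsk.ne']
  intro u v huv
  simp only [hsin]
  refine strictMonoOn_sin ⟨(neg_pi_div_two_lt_arctan _).le, (arctan_lt_pi_div_two _).le⟩
    ⟨(neg_pi_div_two_lt_arctan _).le, (arctan_lt_pi_div_two _).le⟩ ?_
  exact arctan_strictMono (div_lt_div_of_pos_right huv (sqrt_pos.2 hk))

theorem hasDerivAt_sqrt_add_sq {k : ℝ} (hk : 0 < k) (u : ℝ) :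
    HasDerivAt (fun u : ℝ => √(k + u ^ 2)) (u / √(k + u ^ 2)) u := by
  have h : HasDerivAt (fun u : ℝ => k + u ^ 2) (2 * u) u := by
    simpa using (hasDerivAt_pow 2 u).const_add k
  convert h.sqrt (by positivity) using 1
  field_simp

theorem strictMonoOn_sqrt_add_sqrt {k : ℝ} (hk : 0 < k) (c : ℝ) :
    StrictMonoOn (fun t : ℝ => √(k + (c - t) ^ 2) + √(k + (c + t) ^ 2)) (Set.Ici 0) := by
  set f : ℝ → ℝ := fun u => u / √(k + u ^ 2)
  have hderiv : ∀ t : ℝ, HasDerivAt (fun t : ℝ => √(k + (c - t) ^ 2) + √(k + (c + t) ^ 2))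
      (f (c + t) - f (c - t)) t := by
    intro t
    have hminus := (hasDerivAt_sqrt_add_sq hk (c - t)).comp t ((hasDerivAt_id t).const_sub c)
    have hplus := (hasDerivAt_sqrt_add_sq hk (c + t)).comp t ((hasDerivAt_id t).const_add c)
    exact (hminus.add hplus).congr_deriv (by ring)
  refine strictMonoOn_of_hasDerivWithinAt_pos (convex_Ici 0) (by fun_prop)
    (fun t _ => (hderiv t).hasDerivWithinAt) fun t ht => ?_
  rw [interior_Ici, Set.mem_Ioi] at ht
  exact sub_pos.2 (div_sqrt_add_sq_strictMono hk (by linarith))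

theorem two_mul_arth_sqrt_div_add_log {k c t : ℝ} (hk : 0 ≤ k) (hc : 0 < c) (ht : 0 < t) :
    2 * arth (√((k + (c - t) ^ 2) / (k + (c + t) ^ 2))) + log t
      = 2 * log (√(k + (c - t) ^ 2) + √(k + (c + t) ^ 2)) - log (4 * c) := by
  have hminus : 0 ≤ k + (c - t) ^ 2 := by positivity
  have hplus : 0 ≤ k + (c + t) ^ 2 := by positivity
  have hlt : √(k + (c - t) ^ 2) < √(k + (c + t) ^ 2) :=
    sqrt_lt_sqrt hminus (by nlinarith [mul_pos hc ht])
  rw [sqrt_div' _ hplus, two_mul_arth_div (sqrt_nonneg _) hlt, sq_sqrt hminus, sq_sqrt hplus,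
    show k + (c + t) ^ 2 - (k + (c - t) ^ 2) = 4 * c * t by ring,
    log_mul (by positivity) ht.ne']
  ring

theorem strictMonoOn_two_mul_arth_sqrt_div_add_log {k c : ℝ} (hk : 0 < k) (hc : 0 < c) :
    StrictMonoOn (fun t : ℝ => 2 * arth (√((k + (c - t) ^ 2) / (k + (c + t) ^ 2))) + log t)
      (Set.Ioi 0) := by
  intro x hx y hy hxy
  simp only [two_mul_arth_sqrt_div_add_log hk.le hc hx, two_mul_arth_sqrt_div_add_log hk.le hc hy]
  have hpos : 0 < √(k + (c - x) ^ 2) + √(k + (c + x) ^ 2) := by positivity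
  have := log_lt_log hpos (strictMonoOn_sqrt_add_sqrt hk c (Set.mem_Ici.2 (le_of_lt hx))
    (Set.mem_Ici.2 (le_of_lt hy)) hxy)
  linarith

theorem stmt_6_general (θ τ₁ : ℝ) (hθ0 : 0 < θ) :
    StrictMonoOn (fun τ₂ : ℝ =>
      2 * arth (Real.sqrt ((θ ^ 2 + (τ₁ - τ₂) ^ 2) / (θ ^ 2 + (τ₁ + τ₂) ^ 2)))
        - θ / τ₁ - Real.log τ₁ + Real.log τ₂)
      (Set.Icc 1 τ₁) := by
  intro x hx y hy hxy
  have hτ₁ : 0 < τ₁ := by linarith [hx.1, hx.2]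
  have := strictMonoOn_two_mul_arth_sqrt_div_add_log (pow_pos hθ0 2) hτ₁
    (Set.mem_Ioi.2 (by linarith [hx.1])) (Set.mem_Ioi.2 (by linarith [hy.1])) hxy
  simp only at this ⊢
  linarith

theorem stmt_6 (θ τ₁ : ℝ) (hθ0 : 0 < θ) (hθπ : θ ≤ π) (hτ : 1 ≤ τ₁) :
    StrictMonoOn (fun τ₂ : ℝ =>
      2 * arth (Real.sqrt ((θ ^ 2 + (τ₁ - τ₂) ^ 2) / (θ ^ 2 + (τ₁ + τ₂) ^ 2)))
        - θ / τ₁ - Real.log τ₁ + Real.log τ₂)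
      (Set.Icc 1 τ₁) :=
  stmt_6_general θ τ₁ hθ0
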